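/- For every control-flow graph G and every interpretation of the base judgments (readAt, writtenAt, movedAt, movedBefore, liveAt, and the conflict relation on paths), if Polonius rejects G (i.e., access-error(G) is derivable), then the permissions model rejects G (i.e., permission-error(G) is derivable). That is, the permissions model soundly approximates the Polonius model of borrow checking. -/
import Mathlib


/-- Ownership qualifiers for loans: shared or unique. -/
inductive Qual where
  | shrd
  | uniq

/-- Permissions: read, write, own. -/
inductive Perm where
  | R
  | W
  | O

/-- The base judgments parameterizing both the Polonius model and the
permissions model of borrow checking, over paths and instructions. -/
structure BaseJudgments (Path Instr : Type*) where
  /-- path `p` is read at instruction `I` -/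
  readAt : Path → Instr → Prop
  /-- path `p` is written at instruction `I` -/
  writtenAt : Path → Instr → Prop
  /-- path `p` is moved at instruction `I` -/
  movedAt : Path → Instr → Prop
  /-- path `p` was moved before reaching instruction `I` -/
  movedBefore : Path → Instr → Prop
  /-- the loan `(p, ω)` is live at instruction `I` -/
  liveAt : Path → Qual → Instr → Prop
  /-- the conflict relation `p ≈ p'` on paths -/
  conflicts : Path → Path → Prop

/-- `needs at`: a path needs R (resp. W, O) at `I` if it is read
(resp. written, moved) at `I`. -/
inductive NeedsAt {Path Instr : Type*} (B : BaseJudgments Path Instr) :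
    Path → Perm → Instr → Prop where
  | read {p I} : B.readAt p I → NeedsAt B p .R I           -- Perm-Needs-R
  | write {p I} : B.writtenAt p I → NeedsAt B p .W I       -- Perm-Needs-W
  | own {p I} : B.movedAt p I → NeedsAt B p .O I           -- Perm-Needs-O

/-- `missing at`: the conditions under which a path lacks a permission. -/
inductive MissingAt {Path Instr : Type*} (B : BaseJudgments Path Instr) :
    Path → Perm → Instr → Prop where
  /-- Perm-Missing-R: `p` is missing R while a unique loan on a conflicting
  path `p'` is live. -/
  | read {p p' I} : B.liveAt p' .uniq I → B.conflicts p' p → MissingAt B p .R I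
  /-- Perm-Missing-WO: `p` is missing W and O while a loan (any qualifier) on
  a conflicting path `p'` is live. -/
  | writeOwn {p p' ω I} {c : Perm} : (c = .W ∨ c = .O) →
      B.liveAt p' ω I → B.conflicts p' p → MissingAt B p c I
  /-- Perm-Missing-*: `p` is missing every permission after being moved. -/
  | moved {p I} (c : Perm) : B.movedBefore p I → MissingAt B p c I

/-- `invalidated at`: the Polonius conditions under which a loan is
invalidated at an instruction. -/
inductive InvalidatedAt {Path Instr : Type*} (B : BaseJudgments Path Instr) :
    Path → Qual → Instr → Prop where
  /-- Pol-Read-Invalid: a unique loan on `p` is invalidated by a read of a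
  conflicting path `p'`. -/
  | read {p p' I} : B.readAt p' I → B.conflicts p p' → InvalidatedAt B p .uniq I
  /-- Pol-Write-Invalid: any loan on `p` is invalidated by a conflicting write. -/
  | write {p ω p' I} : B.writtenAt p' I → B.conflicts p p' → InvalidatedAt B p ω I
  /-- Pol-Move-Invalid: any loan on `p` is invalidated by a conflicting move. -/
  | move {p ω p' I} : B.movedAt p' I → B.conflicts p p' → InvalidatedAt B p ω I

/-- Polonius rejects the control-flow graph `G` (a set of instructions):
either a live loan is invalidated at some instruction of `G`
(Pol-Borrow-Conflict), or a path moved before some instruction of `G` is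
read there (Pol-Move-Conflict). -/
def AccessError {Path Instr : Type*} (B : BaseJudgments Path Instr)
    (G : Set Instr) : Prop :=
  (∃ p ω I, I ∈ G ∧ B.liveAt p ω I ∧ InvalidatedAt B p ω I) ∨
  (∃ p I, I ∈ G ∧ B.movedBefore p I ∧ B.readAt p I)

/-- The permissions model rejects `G`: some path needs a permission at some
instruction of `G` and is also missing it there (Perm-Fail). -/
def PermissionError {Path Instr : Type*} (B : BaseJudgments Path Instr)
    (G : Set Instr) : Prop :=
  ∃ p c I, I ∈ G ∧ NeedsAt B p c I ∧ MissingAt B p c I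

/-- Soundness of the permissions model w.r.t. the Polonius model: for every
control-flow graph `G` and every interpretation `B` of the base judgments,
if Polonius rejects `G` then the permissions model rejects `G`. -/
theorem permissions_sound_wrt_polonius {Path Instr : Type*}
    (B : BaseJudgments Path Instr) (G : Set Instr)
    (h : AccessError B G) : PermissionError B G := by
  rcases h with ⟨p, ω, I, hI, hlive, hinv⟩ | ⟨p, I, hI, hmv, hrd⟩
  · cases hinv with
    | read hr hc => exact ⟨_, .R, I, hI, .read hr, .read hlive hc⟩
    | write hw hc => exact ⟨_, .W, I, hI, .write hw, .writeOwn (Or.inl rfl) hlive hc⟩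
    | move hm hc => exact ⟨_, .O, I, hI, .own hm, .writeOwn (Or.inr rfl) hlive hc⟩
  · exact ⟨p, .R, I, hI, .read hrd, .moved _ hmv⟩
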